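/- arXiv:math/0502067 — 5 statements merged into one kernel-verified Lean document; each statement's English description precedes it below -/
import Mathlib

section
/- Let g : ℝ² → ℝ² be the shear map g(θ, r) = (θ + b·r, r) for an integer b with |b| ≥ 2. Let K = [k₁, k₂] be an interval on the r-axis with λ(K) ≤ 1, let K_{c,γ} = [c, c+γ] × K be a vertical strip, and let L = [l₁, l₂] ⊆ [0,1] be an interval on the θ-axis, where the first coordinate is taken modulo 1. If b·λ(K) > 2, then the set Q = π_r(K_{c,γ} ∩ g⁻¹(L × K)) (projection onto the r-coordinate of the part of the strip mapped by g into L × K, with first coordinate mod 1) satisfies |λ(Q) − λ(K)·λ(L)| ≤ γ·λ(K) + 2·λ(L)/b + 2γ/b. -/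
/-!
A point `r` lies in `Q` exactly when `b * r` lies in the union of the integer translates of the
interval `[l₁ - c - γ, l₂ - c]`, of length `s = λ(L) + γ`. If `s ≥ 1` these translates cover
the line and `Q = K`. Otherwise, after rescaling by `b`, one counts the translates meeting
`b • K` (at most `b λ(K) + s + 1` of them) and those contained in it (at least
`b λ(K) - s - 1`, pairwise disjoint as `s < 1`); each has length `s`, so
`|b λ(Q) - s b λ(K)| ≤ s (s + 1) ≤ 2 s`.
-/

open MeasureTheory Set

def periodicIcc (a s : ℝ) : Set ℝ := ⋃ m : ℤ, Icc (a + m) (a + m + s)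

lemma periodicIcc_eq_univ {a s : ℝ} (hs : 1 ≤ s) : periodicIcc a s = univ := by
  refine eq_univ_of_forall fun u => mem_iUnion.2 ⟨⌊u - a⌋, ?_, ?_⟩
  · linarith [Int.floor_le (u - a)]
  · linarith [Int.lt_floor_add_one (u - a)]

lemma Int.cast_card_Icc (m n : ℤ) : ((Finset.Icc m n).card : ℝ) = max ((n : ℝ) + 1 - m) 0 := by
  rw [Int.card_Icc]
  exact_mod_cast Int.ofNat_toNat (n + 1 - m)

lemma card_Icc_ceil_floor_le {u v : ℝ} (h : u ≤ v + 1) :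
    ((Finset.Icc ⌈u⌉ ⌊v⌋).card : ℝ) ≤ v - u + 1 := by
  rw [Int.cast_card_Icc]
  exact max_le (by linarith [Int.le_ceil u, Int.floor_le v]) (by linarith)

lemma sub_sub_one_le_card_Icc_ceil_floor (u v : ℝ) :
    v - u - 1 ≤ ((Finset.Icc ⌈u⌉ ⌊v⌋).card : ℝ) := by
  rw [Int.cast_card_Icc]
  exact le_max_of_le_left (by linarith [Int.ceil_lt_add_one u, Int.lt_floor_add_one v])

lemma volume_real_Icc_inter_periodicIcc_le (a : ℝ) {s x y : ℝ} (hs : 0 ≤ s) (hxy : x ≤ y) :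
    volume.real (Icc x y ∩ periodicIcc a s) ≤ s * (y - x + s + 1) := by
  have hcover : Icc x y ∩ periodicIcc a s ⊆
      ⋃ m ∈ Finset.Icc ⌈x - a - s⌉ ⌊y - a⌋, Icc (a + m) (a + m + s) := by
    rintro u ⟨⟨hxu, huy⟩, hu⟩
    obtain ⟨m, hm₁, hm₂⟩ := mem_iUnion.1 hu
    refine mem_biUnion (Finset.mem_Icc.2 ⟨Int.ceil_le.2 ?_, Int.le_floor.2 ?_⟩) ⟨hm₁, hm₂⟩ <;>
      linarith
  calc volume.real (Icc x y ∩ periodicIcc a s)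
      ≤ volume.real (⋃ m ∈ Finset.Icc ⌈x - a - s⌉ ⌊y - a⌋, Icc (a + m) (a + m + s)) :=
        measureReal_mono hcover (measure_biUnion_lt_top (Finset.finite_toSet _)
          fun _ _ => measure_Icc_lt_top).ne
    _ ≤ ∑ m ∈ Finset.Icc ⌈x - a - s⌉ ⌊y - a⌋, volume.real (Icc (a + m) (a + m + s)) :=
        measureReal_biUnion_finset_le _ _
    _ = (Finset.Icc ⌈x - a - s⌉ ⌊y - a⌋).card * s := by
        simp [hs]
    _ ≤ (y - a - (x - a - s) + 1) * s := by
        gcongr; exact card_Icc_ceil_floor_le (by linarith)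
    _ = s * (y - x + s + 1) := by ring

lemma le_volume_real_Icc_inter_periodicIcc (a : ℝ) {s x y : ℝ} (hs₀ : 0 ≤ s) (hs₁ : s < 1) :
    s * (y - x - s - 1) ≤ volume.real (Icc x y ∩ periodicIcc a s) := by
  have hinside : (⋃ m ∈ Finset.Icc ⌈x - a⌉ ⌊y - a - s⌋, Icc (a + m) (a + m + s)) ⊆
      Icc x y ∩ periodicIcc a s := by
    refine iUnion₂_subset fun m hm => ?_
    obtain ⟨hxm, hmy⟩ := Finset.mem_Icc.1 hm
    have := Int.ceil_le.1 hxm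
    have := Int.le_floor.1 hmy
    exact fun u hu => ⟨⟨by linarith [hu.1], by linarith [hu.2]⟩, mem_iUnion.2 ⟨m, hu⟩⟩
  have hdisj : PairwiseDisjoint (↑(Finset.Icc ⌈x - a⌉ ⌊y - a - s⌋))
      fun m : ℤ => Icc (a + m) (a + m + s) := by
    intro m _ n _ hmn
    refine disjoint_left.2 fun u hum hun => hmn ?_
    have hm_lt : (m : ℝ) < n + 1 := by linarith [hum.1, hum.2, hun.1, hun.2]
    have hn_lt : (n : ℝ) < m + 1 := by linarith [hum.1, hum.2, hun.1, hun.2]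
    have : m < n + 1 := by exact_mod_cast hm_lt
    have : n < m + 1 := by exact_mod_cast hn_lt
    omega
  calc s * (y - x - s - 1) = ((y - a - s) - (x - a) - 1) * s := by ring
    _ ≤ (Finset.Icc ⌈x - a⌉ ⌊y - a - s⌋).card * s := by
        gcongr; exact sub_sub_one_le_card_Icc_ceil_floor _ _
    _ = ∑ m ∈ Finset.Icc ⌈x - a⌉ ⌊y - a - s⌋, volume.real (Icc (a + m) (a + m + s)) := by
        simp [hs₀]
    _ = volume.real (⋃ m ∈ Finset.Icc ⌈x - a⌉ ⌊y - a - s⌋, Icc (a + m) (a + m + s)) :=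
        (measureReal_biUnion_finset hdisj (fun _ _ => measurableSet_Icc)
          fun _ _ => measure_Icc_lt_top.ne).symm
    _ ≤ volume.real (Icc x y ∩ periodicIcc a s) :=
        measureReal_mono hinside (measure_ne_top_of_subset inter_subset_left measure_Icc_lt_top.ne)

lemma abs_volume_real_Icc_inter_periodicIcc_sub_le (a : ℝ) {s x y : ℝ} (hs₀ : 0 ≤ s)
    (hs₁ : s < 1) (hxy : x ≤ y) :
    |volume.real (Icc x y ∩ periodicIcc a s) - s * (y - x)| ≤ 2 * s := by
  have hupper := volume_real_Icc_inter_periodicIcc_le a hs₀ hxy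
  have hlower := le_volume_real_Icc_inter_periodicIcc a (x := x) (y := y) hs₀ hs₁
  rw [abs_le]
  constructor <;> nlinarith

lemma volume_real_Icc_inter_preimage_mul_left {B : ℝ} (hB : 0 < B) (k₁ k₂ : ℝ) (S : Set ℝ) :
    volume.real (Icc k₁ k₂ ∩ (B * ·) ⁻¹' S) = B⁻¹ * volume.real (Icc (B * k₁) (B * k₂) ∩ S) := by
  have hpre : Icc k₁ k₂ ∩ (B * ·) ⁻¹' S = (B * ·) ⁻¹' (Icc (B * k₁) (B * k₂) ∩ S) := by
    rw [preimage_inter, preimage_const_mul_Icc₀ _ _ hB, mul_div_cancel_left₀ _ hB.ne',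
      mul_div_cancel_left₀ _ hB.ne']
  rw [hpre, measureReal_def, Real.volume_preimage_mul_left hB.ne', ENNReal.toReal_mul,
    ENNReal.toReal_ofReal (abs_nonneg _), abs_of_pos (inv_pos.2 hB), measureReal_def]

lemma abs_volume_real_Icc_inter_preimage_periodicIcc_sub_le (a : ℝ) {B s k₁ k₂ : ℝ}
    (hB : 0 < B) (hs₀ : 0 ≤ s) (hs₁ : s < 1) (hK : k₁ ≤ k₂) :
    |volume.real (Icc k₁ k₂ ∩ (B * ·) ⁻¹' periodicIcc a s) - s * (k₂ - k₁)| ≤ 2 * s / B := by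
  have h := abs_volume_real_Icc_inter_periodicIcc_sub_le a hs₀ hs₁
    (mul_le_mul_of_nonneg_left hK hB.le)
  rw [volume_real_Icc_inter_preimage_mul_left hB, le_div_iff₀ hB]
  calc |B⁻¹ * volume.real (Icc (B * k₁) (B * k₂) ∩ periodicIcc a s) - s * (k₂ - k₁)| * B
      = |volume.real (Icc (B * k₁) (B * k₂) ∩ periodicIcc a s) - s * (B * k₂ - B * k₁)| := by
        rw [← abs_of_pos hB, ← abs_mul, abs_of_pos hB]
        congr 1
        field_simp
    _ ≤ 2 * s := h

lemma exists_add_int_mem_Icc_iff_mem_periodicIcc {c γ l₁ l₂ : ℝ} (hγ : 0 ≤ γ) (hL : l₁ ≤ l₂)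
    (u : ℝ) :
    (∃ θ ∈ Icc c (c + γ), ∃ p : ℤ, θ + u + p ∈ Icc l₁ l₂) ↔
      u ∈ periodicIcc (l₁ - c - γ) (l₂ - l₁ + γ) := by
  simp only [periodicIcc, mem_iUnion, mem_Icc]
  constructor
  · rintro ⟨θ, ⟨hcθ, hθc⟩, p, hl₁, hl₂⟩
    exact ⟨-p, by push_cast; linarith, by push_cast; linarith⟩
  · rintro ⟨m, hmu, hum⟩
    refine ⟨max c (l₁ - u + m), ⟨le_max_left _ _, max_le (by linarith) (by linarith)⟩, -m, ?_, ?_⟩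
    · push_cast; linarith [le_max_right c (l₁ - u + m)]
    · have : max c (l₁ - u + m) ≤ l₂ - u + m := max_le (by linarith) (by linarith)
      push_cast; linarith

theorem shear_strip_distribution_general
    (b : ℤ)
    (k₁ k₂ c γ l₁ l₂ : ℝ)
    (hK : k₁ ≤ k₂)
    (hγ : 0 ≤ γ)
    (hL₁ : 0 ≤ l₁) (hL : l₁ ≤ l₂) (hL₂ : l₂ ≤ 1)
    (hbK : 2 < (b : ℝ) * (k₂ - k₁))
    (Q : Set ℝ)
    (hQ : Q = {r ∈ Icc k₁ k₂ |
      ∃ θ ∈ Icc c (c + γ), ∃ p : ℤ, θ + (b : ℝ) * r + (p : ℝ) ∈ Icc l₁ l₂}) :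
    |(volume Q).toReal - (k₂ - k₁) * (l₂ - l₁)| ≤
      γ * (k₂ - k₁) + 2 * (l₂ - l₁) / (b : ℝ) + 2 * γ / (b : ℝ) := by
  have hb₀ : 0 < (b : ℝ) := pos_of_mul_pos_left (by linarith) (sub_nonneg.2 hK)
  have hQ' : Q = Icc k₁ k₂ ∩ ((b : ℝ) * ·) ⁻¹' periodicIcc (l₁ - c - γ) (l₂ - l₁ + γ) := by
    rw [hQ]
    ext r
    exact and_congr_right fun _ => exists_add_int_mem_Icc_iff_mem_periodicIcc hγ hL _
  rw [← measureReal_def, hQ']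
  rcases lt_or_ge (l₂ - l₁ + γ) 1 with hs | hs
  · have h := abs_volume_real_Icc_inter_preimage_periodicIcc_sub_le (l₁ - c - γ) hb₀
      (by linarith) hs hK
    calc _ = |volume.real (Icc k₁ k₂ ∩ ((b : ℝ) * ·) ⁻¹' periodicIcc (l₁ - c - γ) (l₂ - l₁ + γ))
          - (l₂ - l₁ + γ) * (k₂ - k₁) + γ * (k₂ - k₁)| := by ring_nf
      _ ≤ _ := abs_add_le _ _
      _ ≤ 2 * (l₂ - l₁ + γ) / b + γ * (k₂ - k₁) := by
          rw [abs_of_nonneg (mul_nonneg hγ (sub_nonneg.2 hK))]; gcongr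
      _ = _ := by ring
  · rw [periodicIcc_eq_univ hs, preimage_univ, inter_univ, Real.volume_real_Icc_of_le hK]
    have herr : 0 ≤ 2 * (l₂ - l₁) / b + 2 * γ / b := by positivity
    rw [abs_le]
    constructor <;> nlinarith [mul_nonneg (sub_nonneg.2 hK) (sub_nonneg.2 hL)]

/-- Shear distribution estimate (Lemma "prelim1" of Fayad–Saprykina):
for the shear `g(θ,r) = (θ + b·r, r)` on the annulus (first coordinate mod 1),
the projection `Q` to the `r`-axis of the part of the vertical strip
`[c,c+γ] × K` mapped by `g` into `L × K` has measure close to `λ(K)·λ(L)`. -/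
theorem shear_strip_distribution
    (b : ℤ) (hb : 2 ≤ |b|)
    (k₁ k₂ c γ l₁ l₂ : ℝ)
    (hK : k₁ ≤ k₂) (hKlen : k₂ - k₁ ≤ 1)
    (hγ : 0 ≤ γ)
    (hL₁ : 0 ≤ l₁) (hL : l₁ ≤ l₂) (hL₂ : l₂ ≤ 1)
    (hbK : 2 < (b : ℝ) * (k₂ - k₁))
    (Q : Set ℝ)
    (hQ : Q = {r ∈ Icc k₁ k₂ |
      ∃ θ ∈ Icc c (c + γ), ∃ p : ℤ, θ + (b : ℝ) * r + (p : ℝ) ∈ Icc l₁ l₂}) :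
    |(volume Q).toReal - (k₂ - k₁) * (l₂ - l₁)| ≤
      γ * (k₂ - k₁) + 2 * (l₂ - l₁) / (b : ℝ) + 2 * γ / (b : ℝ) :=
  shear_strip_distribution_general b k₁ k₂ c γ l₁ l₂ hK hγ hL₁ hL hL₂ hbK Q hQ
end

section
/- Let f : I → ℝ be a C² function on a compact interval I, let k > 0 and ε > 0, and set J = [inf_I f, sup_I f]. Suppose inf_{x∈I} |f'(x)| · λ(I) ≥ k and sup_{x∈I} |f''(x)| · λ(I) ≤ ε · inf_{x∈I} |f'(x)|. Then λ(J) ≥ k and for every subinterval J̃ ⊆ J one has |λ(I ∩ f⁻¹(J̃))/λ(I) − λ(J̃)/λ(J)| ≤ ε · λ(J̃)/λ(J). -/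
/-! On `I = [a, b]` the derivative never vanishes, so by Darboux it has constant sign and, after
replacing `f` by `-f`, `f` is strictly increasing: `J = [f a, f b]` and the part of `I` sent into
`[c, d] ⊆ J` is an interval `[x₁, x₂]` with `f x₁ = c`, `f x₂ = d`. The mean value theorem gives
`λ(J) = f'(η) λ(I)` and `d - c = f'(ξ) (x₂ - x₁)`, so the deviation to estimate is
`(x₂ - x₁) / λ(I) · |f'(η) - f'(ξ)| / f'(η)`, and
`|f'(η) - f'(ξ)| ≤ sup |f''| · λ(I) ≤ ε · inf |f'| ≤ ε f'(ξ)`. -/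

open MeasureTheory Set

theorem abs_div_sub_mul_div_le {ℓ L p q ε : ℝ} (hℓ : 0 ≤ ℓ) (hL : 0 < L) (hq : 0 < q)
    (h : |q - p| ≤ ε * p) : |ℓ / L - p * ℓ / (q * L)| ≤ ε * (p * ℓ / (q * L)) := by
  have hqL : 0 < q * L := mul_pos hq hL
  have hsub : ℓ / L - p * ℓ / (q * L) = (q - p) * ℓ / (q * L) := by
    field_simp
  rw [hsub, abs_div, abs_mul, abs_of_nonneg hℓ, abs_of_pos hqL, ← mul_div_assoc, ← mul_assoc]
  gcongr

theorem exists_mem_Ioo_sub_eq_deriv_mul {f : ℝ → ℝ} {a b x₁ x₂ : ℝ} (hab : a < b)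
    (hf : ContinuousOn f (Icc a b)) (hdiff : DifferentiableOn ℝ f (Ioo a b))
    (hx₁ : x₁ ∈ Icc a b) (hx₂ : x₂ ∈ Icc a b) (hx : x₁ ≤ x₂) :
    ∃ ξ ∈ Ioo a b, f x₂ - f x₁ = deriv f ξ * (x₂ - x₁) := by
  rcases hx.eq_or_lt with rfl | hlt
  · exact ⟨(a + b) / 2, ⟨by linarith, by linarith⟩, by simp⟩
  obtain ⟨ξ, hξ, hslope⟩ := exists_deriv_eq_slope f hlt
    (hf.mono (Icc_subset_Icc hx₁.1 hx₂.2)) (hdiff.mono (Ioo_subset_Ioo hx₁.1 hx₂.2))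
  refine ⟨ξ, Ioo_subset_Ioo hx₁.1 hx₂.2 hξ, ?_⟩
  rw [hslope, div_mul_cancel₀ _ (sub_ne_zero.2 hlt.ne')]

theorem abs_sub_le_of_abs_deriv_le {g : ℝ → ℝ} {a b M x y : ℝ}
    (hg : DifferentiableOn ℝ g (Ioo a b)) (hM : ∀ z ∈ Ioo a b, |deriv g z| ≤ M)
    (hx : x ∈ Ioo a b) (hy : y ∈ Ioo a b) : |g x - g y| ≤ M * (b - a) := calc
  |g x - g y| ≤ M * |x - y| := (convex_Ioo a b).norm_image_sub_le_of_norm_deriv_le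
      (fun z hz => hg.differentiableAt (isOpen_Ioo.mem_nhds hz)) hM hy hx
  _ ≤ M * (b - a) := by
      gcongr
      · exact (abs_nonneg _).trans (hM x hx)
      · exact abs_sub_le_iff.2 ⟨by linarith [hx.2, hy.1], by linarith [hx.1, hy.2]⟩

theorem StrictMonoOn.inter_preimage_Icc {f : ℝ → ℝ} {a b x₁ x₂ : ℝ}
    (hf : StrictMonoOn f (Icc a b)) (hx₁ : x₁ ∈ Icc a b) (hx₂ : x₂ ∈ Icc a b) :
    Icc a b ∩ f ⁻¹' Icc (f x₁) (f x₂) = Icc x₁ x₂ := by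
  ext x
  simp only [mem_inter_iff, mem_preimage, mem_Icc]
  constructor
  · rintro ⟨hx, h₁, h₂⟩
    exact ⟨(hf.le_iff_le hx₁ hx).1 h₁, (hf.le_iff_le hx hx₂).1 h₂⟩
  · rintro ⟨h₁, h₂⟩
    have hx : x ∈ Icc a b := ⟨hx₁.1.trans h₁, h₂.trans hx₂.2⟩
    exact ⟨hx, (hf.le_iff_le hx₁ hx).2 h₁, (hf.le_iff_le hx hx₂).2 h₂⟩

theorem bddAbove_abs_deriv_deriv_image_Icc {f : ℝ → ℝ} {a b : ℝ} (hab : a < b)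
    (hf : ContDiffOn ℝ 2 f (Icc a b)) :
    BddAbove ((fun x => |deriv (deriv f) x|) '' Icc a b) := by
  have hcont : ContinuousOn (iteratedDerivWithin 2 f (Icc a b)) (Icc a b) :=
    hf.continuousOn_iteratedDerivWithin le_rfl (uniqueDiffOn_Icc hab)
  have heq : EqOn (fun x => |iteratedDerivWithin 2 f (Icc a b) x|)
      (fun x => |deriv (deriv f) x|) (Ioo a b) := fun x hx => by
    simp only
    rw [iteratedDerivWithin_eq_iteratedDeriv (uniqueDiffOn_Icc hab)
      (hf.contDiffAt (Icc_mem_nhds hx.1 hx.2)) (Ioo_subset_Icc_self hx)]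
    simp [iteratedDeriv_succ]
  -- `hf` says nothing about `deriv (deriv f)` at the endpoints: bound them separately.
  rw [← Ico_insert_right hab.le, ← Ioo_insert_left hab, image_insert_eq, image_insert_eq,
    bddAbove_insert, bddAbove_insert, ← heq.image_eq]
  exact (isCompact_Icc.image_of_continuousOn hcont.abs).bddAbove.mono
    (image_mono Ioo_subset_Icc_self)

def UniformlyStretchingOn (ε k : ℝ) (f : ℝ → ℝ) (a b : ℝ) : Prop :=
  k ≤ sSup (f '' Icc a b) - sInf (f '' Icc a b) ∧
    ∀ c d : ℝ, sInf (f '' Icc a b) ≤ c → c ≤ d → d ≤ sSup (f '' Icc a b) →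
      |(volume (Icc a b ∩ f ⁻¹' Icc c d)).toReal / (b - a)
          - (d - c) / (sSup (f '' Icc a b) - sInf (f '' Icc a b))|
        ≤ ε * ((d - c) / (sSup (f '' Icc a b) - sInf (f '' Icc a b)))

theorem UniformlyStretchingOn.of_neg {ε k a b : ℝ} {f : ℝ → ℝ}
    (h : UniformlyStretchingOn ε k (fun x => -f x) a b) : UniformlyStretchingOn ε k f a b := by
  have himage : (fun x => -f x) '' Icc a b = -(f '' Icc a b) := by
    rw [← image_image (fun y => -y) f, image_neg_eq_neg]
  have hpreimage (c d : ℝ) : (fun x => -f x) ⁻¹' Icc (-d) (-c) = f ⁻¹' Icc c d := by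
    ext
    simp [and_comm]
  rw [UniformlyStretchingOn, himage, Real.sSup_neg, Real.sInf_neg] at h
  refine ⟨by linarith [h.1], fun c d hc hcd hd => ?_⟩
  have := h.2 (-d) (-c) (neg_le_neg hd) (neg_le_neg hcd) (neg_le_neg hc)
  rwa [hpreimage, neg_sub_neg, neg_sub_neg] at this

theorem uniformlyStretchingOn_of_deriv_pos {ε k a b : ℝ} {f : ℝ → ℝ} (hab : a < b)
    (hf : ContinuousOn f (Icc a b)) (hdiff : DifferentiableOn ℝ f (Ioo a b))
    (hpos : ∀ x ∈ Ioo a b, 0 < deriv f x)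
    (hk : ∀ x ∈ Ioo a b, k ≤ deriv f x * (b - a))
    (hosc : ∀ x ∈ Ioo a b, ∀ y ∈ Ioo a b, |deriv f x - deriv f y| ≤ ε * deriv f y) :
    UniformlyStretchingOn ε k f a b := by
  have hmono : StrictMonoOn f (Icc a b) :=
    strictMonoOn_of_deriv_pos (convex_Icc a b) hf (by rwa [interior_Icc])
  obtain ⟨η, hη, hfab⟩ := exists_mem_Ioo_sub_eq_deriv_mul hab hf hdiff
    (left_mem_Icc.2 hab.le) (right_mem_Icc.2 hab.le) hab.le
  rw [UniformlyStretchingOn, hmono.monotoneOn.sInf_image_Icc hab.le,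
    hmono.monotoneOn.sSup_image_Icc hab.le, hfab]
  refine ⟨hk η hη, fun c d hc hcd hd => ?_⟩
  obtain ⟨x₁, hx₁, rfl⟩ := intermediate_value_Icc hab.le hf ⟨hc, hcd.trans hd⟩
  obtain ⟨x₂, hx₂, rfl⟩ := intermediate_value_Icc hab.le hf ⟨hc.trans hcd, hd⟩
  have hx : x₁ ≤ x₂ := (hmono.le_iff_le hx₁ hx₂).1 hcd
  obtain ⟨ξ, hξ, hfx⟩ := exists_mem_Ioo_sub_eq_deriv_mul hab hf hdiff hx₁ hx₂ hx
  rw [hmono.inter_preimage_Icc hx₁ hx₂, Real.volume_Icc, ENNReal.toReal_ofReal (sub_nonneg.2 hx),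
    hfx]
  exact abs_div_sub_mul_div_le (sub_nonneg.2 hx) (sub_pos.2 hab) (hpos η hη) (hosc η hη ξ hξ)

theorem uniformlyStretchingOn_of_abs_deriv {ε k a b : ℝ} {f : ℝ → ℝ} (hab : a < b)
    (hf : ContinuousOn f (Icc a b)) (hdiff : DifferentiableOn ℝ f (Ioo a b))
    (hne : ∀ x ∈ Ioo a b, deriv f x ≠ 0)
    (hk : ∀ x ∈ Ioo a b, k ≤ |deriv f x| * (b - a))
    (hosc : ∀ x ∈ Ioo a b, ∀ y ∈ Ioo a b, |deriv f x - deriv f y| ≤ ε * |deriv f y|) :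
    UniformlyStretchingOn ε k f a b := by
  have hderiv : ∀ x ∈ Ioo a b, HasDerivWithinAt f (deriv f x) (Ioo a b) x := fun x hx =>
    (hdiff.differentiableAt (isOpen_Ioo.mem_nhds hx)).hasDerivAt.hasDerivWithinAt
  rcases hasDerivWithinAt_forall_lt_or_forall_gt_of_forall_ne (convex_Ioo a b) hderiv hne
    with hneg | hpos
  · have hderiv_neg : ∀ x, deriv (fun y => -f y) x = -deriv f x := fun x => deriv.neg
    refine UniformlyStretchingOn.of_neg (uniformlyStretchingOn_of_deriv_pos hab hf.neg hdiff.neg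
      ?_ ?_ ?_) <;> simp only [hderiv_neg]
    · exact fun x hx => neg_pos.2 (hneg x hx)
    · exact fun x hx => abs_of_neg (hneg x hx) ▸ hk x hx
    · intro x hx y hy
      rw [neg_sub_neg, abs_sub_comm]
      exact (hosc x hx y hy).trans_eq (by rw [abs_of_neg (hneg y hy)])
  · refine uniformlyStretchingOn_of_deriv_pos hab hf hdiff hpos ?_ ?_
    · exact fun x hx => abs_of_pos (hpos x hx) ▸ hk x hx
    · exact fun x hx y hy => (hosc x hx y hy).trans_eq (by rw [abs_of_pos (hpos y hy)])

/-- Criterion for uniform stretch: if `inf_I |f'| · λ(I) ≥ k` and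
`sup_I |f''| · λ(I) ≤ ε · inf_I |f'|`, then `f` is `(ε,k)`-uniformly stretching
on `I`: the image interval `J` has length at least `k`, and the proportion of
`I` sent by `f` into any subinterval `J̃ ⊆ J` deviates from `λ(J̃)/λ(J)` by at
most `ε·λ(J̃)/λ(J)`. -/
theorem uniform_stretch_criterion
    (a b : ℝ) (hab : a < b) (f : ℝ → ℝ)
    (hf : ContDiffOn ℝ 2 f (Icc a b))
    (k ε : ℝ) (hk : 0 < k) (hε : 0 < ε)
    (m M : ℝ)
    (hm : m = sInf ((fun x => |deriv f x|) '' Icc a b))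
    (hM : M = sSup ((fun x => |deriv (deriv f) x|) '' Icc a b))
    (h1 : k ≤ m * (b - a))
    (h2 : M * (b - a) ≤ ε * m)
    (jinf jsup : ℝ)
    (hjinf : jinf = sInf (f '' Icc a b)) (hjsup : jsup = sSup (f '' Icc a b)) :
    k ≤ jsup - jinf ∧
      ∀ c d : ℝ, jinf ≤ c → c ≤ d → d ≤ jsup →
        |(volume (Icc a b ∩ f ⁻¹' Icc c d)).toReal / (b - a)
            - (d - c) / (jsup - jinf)|
          ≤ ε * ((d - c) / (jsup - jinf)) := by
  have hm_le : ∀ x ∈ Icc a b, m ≤ |deriv f x| := fun x hx =>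
    hm ▸ csInf_le ⟨0, fun _ ⟨_, _, hy⟩ => hy ▸ abs_nonneg _⟩ (mem_image_of_mem _ hx)
  have hM_ge : ∀ x ∈ Ioo a b, |deriv (deriv f) x| ≤ M := fun x hx =>
    hM ▸ le_csSup (bddAbove_abs_deriv_deriv_image_Icc hab hf)
      (mem_image_of_mem _ (Ioo_subset_Icc_self hx))
  have hm0 : 0 < m := pos_of_mul_pos_left (hk.trans_le h1) (sub_pos.2 hab).le
  have hdiff_deriv : DifferentiableOn ℝ (deriv f) (Ioo a b) :=
    ContDiffOn.differentiableOn (n := 1)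
      ((hf.mono Ioo_subset_Icc_self).deriv_of_isOpen isOpen_Ioo (by norm_num)) one_ne_zero
  have hosc : ∀ x ∈ Ioo a b, ∀ y ∈ Ioo a b, |deriv f x - deriv f y| ≤ ε * |deriv f y| := by
    intro x hx y hy
    calc |deriv f x - deriv f y|
        ≤ M * (b - a) := abs_sub_le_of_abs_deriv_le hdiff_deriv hM_ge hx hy
      _ ≤ ε * m := h2
      _ ≤ ε * |deriv f y| := by gcongr; exact hm_le y (Ioo_subset_Icc_self hy)
  subst hjinf hjsup
  exact uniformlyStretchingOn_of_abs_deriv hab hf.continuousOn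
    ((hf.differentiableOn (by norm_num)).mono Ioo_subset_Icc_self)
    (fun x hx => abs_pos.1 (hm0.trans_le (hm_le x (Ioo_subset_Icc_self hx))))
    (fun x hx => h1.trans (by gcongr; exact hm_le x (Ioo_subset_Icc_self hx))) hosc
end

section
/- Let ψ(θ) = q²·(cos(2π(qθ + β)) − cos(2πqθ)) where q ≥ 1 is an integer and β ∈ ℝ satisfies |β − 1/2| (mod 1) ≤ q⁻⁶. Let B = ⋃_{k=0}^{2q} [k/(2q) − 1/(2q^{3/2}), k/(2q) + 1/(2q^{3/2})]. Then for q sufficiently large, for all θ ∈ [0,1] \ B one has |ψ'(θ)| ≥ q^{5/2} and |ψ''(θ)| ≤ 9π²·q⁴. -/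
open Real Set

/-!
Write `β = 1/2 - k + ε` with `|ε| ≤ q⁻⁶`. Then `sin (x + 2πβ) = -sin (x + 2πε)`, so
`ψ'(θ) = 2πq³ (sin x - sin (x + 2πβ))` with `x = 2πqθ` is `2πq³ (2 sin x + O(q⁻⁶))`.
Outside `B` the point `2qθ` is more than `q^{-1/2}` away from every integer, hence by Jordan's
inequality `|sin x| ≥ 2 q^{-1/2}`, which gives `|ψ'| ≥ 6π q^{5/2}`.
The bound on `ψ'' = 4π²q⁴ (cos x - cos (x + 2πβ))` is the trivial one.
-/

lemma rpow_natCast_add_half {x : ℝ} (hx : 0 < x) (n : ℕ) :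
    x ^ ((n : ℝ) + 1 / 2) = x ^ n * √x := by
  rw [rpow_add hx, rpow_natCast, sqrt_eq_rpow]

lemma two_mul_abs_sub_round_le_abs_sin_pi_mul (t : ℝ) : 2 * |t - round t| ≤ |sin (π * t)| := by
  set u := t - round t
  have hu : |u| ≤ 1 / 2 := abs_sub_round t
  have hperiod : |sin (π * t)| = |sin (π * u)| := by
    rw [show π * t = π * u + (round t : ℤ) * π by ring, sin_add_int_mul_pi, abs_mul,
      abs_neg_one_zpow, one_mul]
  have hπu : π * |u| ≤ π / 2 := by nlinarith [pi_pos]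
  have hπu' : |π * u| ≤ π := by rw [abs_mul, abs_of_pos pi_pos]; linarith [pi_pos]
  rw [hperiod, abs_sin_eq_sin_abs_of_abs_le_pi hπu', abs_mul, abs_of_pos pi_pos]
  have := mul_le_sin (by positivity) hπu
  rwa [← mul_assoc, div_mul_cancel₀ _ pi_ne_zero] at this

lemma sub_le_abs_sin_sub_sin_add_two_pi_mul {β η : ℝ} {k : ℤ} (hβ : |β - 1 / 2 + k| ≤ η)
    (x : ℝ) : 2 * |sin x| - 2 * π * η ≤ |sin x - sin (x + 2 * π * β)| := by
  set ε := β - 1 / 2 + k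
  have hflip : sin (x + 2 * π * β) = -sin (x + 2 * π * ε) := by
    rw [show x + 2 * π * β = x + 2 * π * ε + π + (-k : ℤ) * (2 * π) by push_cast; ring,
      sin_add_int_mul_two_pi, sin_add_pi]
  have hclose : |sin (x + 2 * π * ε) - sin x| ≤ 2 * π * η := by
    calc |sin (x + 2 * π * ε) - sin x| ≤ |x + 2 * π * ε - x| := abs_sin_sub_sin_le _ _
      _ = 2 * π * |ε| := by rw [add_sub_cancel_left, abs_mul, abs_of_pos two_pi_pos]
      _ ≤ 2 * π * η := by gcongr
  have htri := abs_add_le (sin x + sin (x + 2 * π * ε)) (sin x - sin (x + 2 * π * ε))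
  rw [show sin x + sin (x + 2 * π * ε) + (sin x - sin (x + 2 * π * ε)) = 2 * sin x by ring,
    abs_mul, abs_two, abs_sub_comm] at htri
  rw [hflip, sub_neg_eq_add]
  linarith

lemma mem_biUnion_Icc_of_abs_sub_round_le {n : ℕ} (hn : 0 < n) {θ δ : ℝ} (hθ : θ ∈ Icc 0 1)
    (h : |n * θ - round (n * θ)| ≤ n * δ) :
    θ ∈ ⋃ k ∈ Finset.range (n + 1), Icc ((k : ℝ) / n - δ) ((k : ℝ) / n + δ) := by
  have hn' : (0 : ℝ) < n := by exact_mod_cast hn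
  have hk0 : 0 ≤ round (n * θ) := by
    rw [round_eq, Int.le_floor]; push_cast; nlinarith [hθ.1]
  have hkn : round (n * θ) ≤ n := by
    rw [round_eq, Int.floor_le_iff]; push_cast; nlinarith [hθ.2]
  lift round (n * θ) to ℕ using hk0 with k hk
  refine mem_iUnion₂.2 ⟨k, Finset.mem_range.2 (by omega), ?_⟩
  have hdist : |θ - k / n| ≤ δ := by
    rw [Int.cast_natCast, show n * θ - k = n * (θ - k / n) by field_simp, abs_mul,
      abs_of_pos hn'] at h
    exact le_of_mul_le_mul_left h hn'
  rw [mem_Icc]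
  constructor <;> linarith [abs_le.1 hdist]

noncomputable def psi (q β θ : ℝ) : ℝ :=
  q ^ 2 * (cos (2 * π * (q * θ + β)) - cos (2 * π * q * θ))

lemma deriv_psi (q β : ℝ) :
    deriv (psi q β) = fun θ =>
      2 * π * q ^ 3 * (sin (2 * π * q * θ) - sin (2 * π * q * θ + 2 * π * β)) := by
  funext θ
  have hin := (((hasDerivAt_id' θ).const_mul q).add_const β).const_mul (2 * π)
  have hlin := (hasDerivAt_id' θ).const_mul (2 * π * q)
  exact (((hin.cos.sub hlin.cos).const_mul (q ^ 2)).congr_deriv (by ring_nf)).deriv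

lemma deriv_deriv_psi (q β : ℝ) :
    deriv (deriv (psi q β)) = fun θ =>
      4 * π ^ 2 * q ^ 4 * (cos (2 * π * q * θ) - cos (2 * π * q * θ + 2 * π * β)) := by
  rw [deriv_psi]
  funext θ
  have hlin := (hasDerivAt_id' θ).const_mul (2 * π * q)
  exact (((hlin.sin.sub (hlin.add_const (2 * π * β)).sin).const_mul (2 * π * q ^ 3)).congr_deriv
    (by ring)).deriv

lemma abs_deriv_deriv_psi_le (q β θ : ℝ) : |deriv (deriv (psi q β)) θ| ≤ 9 * π ^ 2 * q ^ 4 := by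
  have hcos : |cos (2 * π * q * θ) - cos (2 * π * q * θ + 2 * π * β)| ≤ 2 := by
    linarith [abs_sub (cos (2 * π * q * θ)) (cos (2 * π * q * θ + 2 * π * β)),
      abs_cos_le_one (2 * π * q * θ), abs_cos_le_one (2 * π * q * θ + 2 * π * β)]
  rw [deriv_deriv_psi, abs_mul, abs_of_nonneg (by positivity)]
  have hpos : 0 ≤ π ^ 2 * q ^ 4 := by positivity
  nlinarith

lemma rpow_five_halves_le_abs_deriv_psi {q β θ : ℝ} {k : ℤ} (hq : 2 ≤ q)
    (hβ : |β - 1 / 2 + k| ≤ (q ^ 6)⁻¹) (hsin : 2 / √q ≤ |sin (2 * π * q * θ)|) :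
    q ^ ((5 : ℝ) / 2) ≤ |deriv (psi q β) θ| := by
  set s := √q
  have hs1 : 1 ≤ s := one_le_sqrt.2 (by linarith)
  have hsq : s ^ 2 = q := sq_sqrt (by linarith)
  have hperturb : 2 * π * (q ^ 6)⁻¹ ≤ 1 / s := by
    have h32 : (2 : ℝ) ^ 5 ≤ q ^ 5 := pow_le_pow_left₀ (by norm_num) hq 5
    rw [← div_eq_mul_inv, div_le_div_iff₀ (by positivity) (by positivity)]
    nlinarith [pi_le_four]
  have hlow := sub_le_abs_sin_sub_sin_add_two_pi_mul hβ (2 * π * q * θ)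
  rw [deriv_psi, abs_mul, abs_of_pos (by positivity),
    show (5 : ℝ) / 2 = (2 : ℕ) + 1 / 2 by norm_num, rpow_natCast_add_half (by linarith)]
  calc q ^ 2 * s ≤ 2 * π * q ^ 3 * (3 / s) := by
        rw [← hsq]; field_simp; nlinarith [pi_gt_three, pow_pos (by linarith : (0 : ℝ) < s) 5]
    _ ≤ _ := by gcongr; linarith [show 3 / s = 2 * (2 / s) - 1 / s by ring]

/-- Derivative estimates for `ψ(θ) = q²(cos(2π(qθ+β)) − cos(2πqθ))` outside
the bad set `B`: for `q` large enough, if `β` is within `q⁻⁶` of `1/2` mod 1,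
then `|ψ'| ≥ q^{5/2}` and `|ψ''| ≤ 9π²q⁴` on `[0,1] \ B`. -/
theorem psi_derivative_estimates :
    ∃ Q₀ : ℕ, ∀ q : ℕ, Q₀ ≤ q → ∀ β : ℝ,
      (∃ k : ℤ, |β - 1 / 2 + (k : ℝ)| ≤ ((q : ℝ) ^ 6)⁻¹) →
      ∀ ψ : ℝ → ℝ,
        (ψ = fun θ => (q : ℝ) ^ 2 *
            (Real.cos (2 * π * ((q : ℝ) * θ + β)) - Real.cos (2 * π * (q : ℝ) * θ))) →
        ∀ B : Set ℝ,
          (B = ⋃ k ∈ Finset.range (2 * q + 1),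
              Icc ((k : ℝ) / (2 * q) - 1 / (2 * (q : ℝ) ^ ((3 : ℝ) / 2)))
                  ((k : ℝ) / (2 * q) + 1 / (2 * (q : ℝ) ^ ((3 : ℝ) / 2)))) →
          ∀ θ ∈ Icc (0 : ℝ) 1 \ B,
            (q : ℝ) ^ ((5 : ℝ) / 2) ≤ |deriv ψ θ| ∧
            |deriv (deriv ψ) θ| ≤ 9 * π ^ 2 * (q : ℝ) ^ 4 := by
  refine ⟨2, fun q hq β ⟨k, hβ⟩ ψ hψ B hB θ hθ => ?_⟩
  obtain rfl : ψ = psi q β := hψ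
  have hq2 : (2 : ℝ) ≤ q := by exact_mod_cast hq
  have hfar : 1 / √q < |2 * q * θ - round (2 * q * θ)| := by
    by_contra! hnear
    have hwidth : 2 * (q : ℝ) * (1 / (2 * (q : ℝ) ^ ((3 : ℝ) / 2))) = 1 / √q := by
      rw [show (3 : ℝ) / 2 = (1 : ℕ) + 1 / 2 by norm_num, rpow_natCast_add_half (by linarith)]
      field_simp
    have hmem := mem_biUnion_Icc_of_abs_sub_round_le (n := 2 * q) (by omega) hθ.1
      (δ := 1 / (2 * (q : ℝ) ^ ((3 : ℝ) / 2))) (by push_cast; rwa [hwidth])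
    push_cast at hmem
    exact hθ.2 (hB ▸ hmem)
  have hsin : 2 / √q ≤ |sin (2 * π * q * θ)| := by
    have := two_mul_abs_sub_round_le_abs_sin_pi_mul (2 * q * θ)
    rw [show π * (2 * q * θ) = 2 * π * q * θ by ring] at this
    linarith [div_eq_mul_one_div 2 √q]
  exact ⟨rpow_five_halves_le_abs_deriv_psi hq2 hβ hsin, abs_deriv_deriv_psi_le q β θ⟩
end

section
/- Suppose f is a measure-preserving invertible transformation of a probability space (M, μ), (m_n) is an increasing sequence of naturals, and (f_n) is a sequence of measure-preserving transformations with sup_x dist(f^{m_n}(x), f_n^{m_n}(x)) < 2^{−n}. Suppose that for every square A ⊂ M and ε > 0, for all sufficiently large n and all atoms Γ of a partial decomposition ν_n, |λ_n(Γ ∩ f_n^{−m_n}(A)) − λ_n(Γ)·μ(A)| ≤ ε·λ_n(Γ)·μ(A), where λ_n is the conditional measure on Γ. Then the same estimate (with ε replaced by a fixed multiple of ε) holds with f in place of f_n, for all sufficiently large n. -/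
open MeasureTheory Set Metric

/-- A "square" in the torus `𝕋² = ℝ/ℤ × ℝ/ℤ`: the product of two arcs which
are images of closed intervals of equal (positive) length. -/
def IsTorusSquare (A : Set (UnitAddCircle × UnitAddCircle)) : Prop :=
  ∃ a b s : ℝ, 0 < s ∧
    A = ((fun x : ℝ => (x : UnitAddCircle)) '' Icc a (a + s)) ×ˢ
        ((fun x : ℝ => (x : UnitAddCircle)) '' Icc b (b + s))

lemma arc_eq_closedBall (c r : ℝ) :
    (fun x : ℝ => (x : UnitAddCircle)) '' Icc (c - r) (c + r) = closedBall (c : UnitAddCircle) r := by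
  ext y
  constructor
  · rintro ⟨t, ⟨h1, h2⟩, rfl⟩
    simp only [mem_closedBall, dist_eq_norm, ← QuotientAddGroup.mk_sub]
    calc ‖((t - c : ℝ) : UnitAddCircle)‖ = |t - c - round (t - c)| := UnitAddCircle.norm_eq
      _ ≤ |t - c - ((0 : ℤ) : ℝ)| := round_le (t - c) 0
      _ ≤ r := by rw [Int.cast_zero, sub_zero, abs_le]; constructor <;> linarith
  · intro hy
    obtain ⟨t₀, rfl⟩ := QuotientAddGroup.mk_surjective y
    have hd : |t₀ - c - round (t₀ - c)| ≤ r := by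
      have : dist ((t₀ : UnitAddCircle)) ((c : UnitAddCircle)) ≤ r := hy
      rwa [dist_eq_norm, ← QuotientAddGroup.mk_sub, UnitAddCircle.norm_eq] at this
    refine ⟨t₀ - round (t₀ - c), ?_, ?_⟩
    · rw [abs_le] at hd; constructor <;> [linarith; linarith]
    · have : ((round (t₀ - c) : ℝ) : UnitAddCircle) = 0 :=
        (AddCircle.coe_eq_zero_iff 1).mpr ⟨round (t₀ - c), by simp⟩
      simp only [← QuotientAddGroup.mk_sub]
      show ((t₀ - (round (t₀ - c) : ℝ) : ℝ) : UnitAddCircle) = (t₀ : UnitAddCircle)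
      rw [QuotientAddGroup.mk_sub, this, sub_zero]

lemma sq_volume (c d r : ℝ) (hr : 0 ≤ r) :
    (volume ((closedBall (c : UnitAddCircle) r) ×ˢ (closedBall (d : UnitAddCircle) r))).toReal
      = min 1 (2 * r) * min 1 (2 * r) := by
  rw [Measure.volume_eq_prod, Measure.prod_prod, AddCircle.volume_closedBall,
    AddCircle.volume_closedBall, ENNReal.toReal_mul,
    ENNReal.toReal_ofReal (le_min zero_le_one (by linarith))]

set_option maxHeartbeats 2000000 in
lemma kscal_aux {e : ℝ} (h0 : 0 ≤ e) (h1 : e ≤ 1) :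
    (1 + e) * ((1 + e/4) * (1 + e/4)) ≤ 1 + 10 * e := by nlinarith [mul_nonneg h0 h0, mul_nonneg (mul_nonneg h0 h0) h0, mul_nonneg h0 (sub_nonneg.mpr h1), mul_nonneg (mul_nonneg h0 h0) (sub_nonneg.mpr h1)]

lemma kscal2_aux {e : ℝ} (h0 : 0 ≤ e) (h1 : e ≤ 1) :
    1 - 2 * e ≤ (1 - e) * ((1 - e/4) * (1 - e/4)) := by nlinarith [mul_nonneg h0 h0, mul_nonneg (mul_nonneg h0 h0) h0, mul_nonneg h0 (sub_nonneg.mpr h1), mul_nonneg (mul_nonneg h0 h0) (sub_nonneg.mpr h1)]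

lemma mul_le_self_aux {e u : ℝ} (h1 : e ≤ 1) (hu : 0 ≤ u) : e * u ≤ u := by
  nlinarith

/-- Reduction from `f` to `f_n`: if `f^{m_n}` and `f_n^{m_n}` are uniformly
`2^{−n}`-close and the distribution estimate
`|λ_n(Γ ∩ f_n^{−m_n}A) − λ_n(Γ)μ(A)| ≤ ε λ_n(Γ) μ(A)` holds for all squares
`A` and all atoms `Γ` of the partial decompositions `ν_n` (for `n` large),
then the same estimate, with `ε` replaced by a fixed multiple of `ε`, holds
with `f` in place of `f_n`. -/
theorem reduction_from_f_to_fn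
    (μ : Measure (UnitAddCircle × UnitAddCircle)) (hμ : μ = volume)
    [IsProbabilityMeasure μ]
    (f : UnitAddCircle × UnitAddCircle → UnitAddCircle × UnitAddCircle)
    (hf : MeasurePreserving f μ μ)
    (fn : ℕ → UnitAddCircle × UnitAddCircle → UnitAddCircle × UnitAddCircle)
    (hfn : ∀ n, MeasurePreserving (fn n) μ μ)
    (m : ℕ → ℕ) (hm : StrictMono m)
    (hclose : ∀ n x, dist (f^[m n] x) ((fn n)^[m n] x) < (2 : ℝ) ^ (-(n : ℝ)))
    (ν : ℕ → Set (Set (UnitAddCircle × UnitAddCircle)))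
    (lam : ℕ → Measure (UnitAddCircle × UnitAddCircle))
    (hlamfin : ∀ n, IsFiniteMeasure (lam n))
    (hyp : ∀ A, IsTorusSquare A → ∀ ε : ℝ, 0 < ε → ∃ N, ∀ n, N ≤ n → ∀ Γ ∈ ν n,
      |(lam n (Γ ∩ (fn n)^[m n] ⁻¹' A)).toReal
          - (lam n Γ).toReal * (μ A).toReal|
        ≤ ε * (lam n Γ).toReal * (μ A).toReal) :
    ∃ C : ℝ, 0 < C ∧
      ∀ A, IsTorusSquare A → ∀ ε : ℝ, 0 < ε → ∃ N, ∀ n, N ≤ n → ∀ Γ ∈ ν n,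
        |(lam n (Γ ∩ f^[m n] ⁻¹' A)).toReal
            - (lam n Γ).toReal * (μ A).toReal|
          ≤ C * ε * (lam n Γ).toReal * (μ A).toReal := by
  subst hμ
  refine ⟨10, by norm_num, ?_⟩
  rintro A hA ε hε
  obtain ⟨a, b, s, hs, rfl⟩ := hA
  set ε' : ℝ := min ε 1 with hε'def
  have hε'pos : 0 < ε' := lt_min hε one_pos
  have hε'le1 : ε' ≤ 1 := min_le_right _ _
  have hε'leε : ε' ≤ ε := min_le_left _ _
  set u : ℝ := min 1 s with hu
  have hupos : 0 < u := lt_min one_pos hs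
  have hule1 : u ≤ 1 := min_le_left _ _
  have hules : u ≤ s := min_le_right _ _
  set δ : ℝ := ε' * u / 8 with hδ
  have hδpos : 0 < δ := by positivity
  have hεu : ε' * u ≤ u := mul_le_self_aux hε'le1 hupos.le
  have hδlt : 2 * δ < s := by rw [hδ]; linarith
  -- rewrite the square as a product of closed balls
  have hAeq : ((fun x : ℝ => (x : UnitAddCircle)) '' Icc a (a + s)) ×ˢ
        ((fun x : ℝ => (x : UnitAddCircle)) '' Icc b (b + s))
      = closedBall ((a + s/2 : ℝ) : UnitAddCircle) (s/2) ×ˢ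
        closedBall ((b + s/2 : ℝ) : UnitAddCircle) (s/2) := by
    rw [← arc_eq_closedBall, ← arc_eq_closedBall]
    congr 2 <;> ring_nf
  rw [hAeq]
  set A₁ := closedBall ((a + s/2 : ℝ) : UnitAddCircle) (s/2 - δ) ×ˢ
      closedBall ((b + s/2 : ℝ) : UnitAddCircle) (s/2 - δ) with hA₁
  set A₂ := closedBall ((a + s/2 : ℝ) : UnitAddCircle) (s/2 + δ) ×ˢ
      closedBall ((b + s/2 : ℝ) : UnitAddCircle) (s/2 + δ) with hA₂
  have hA₁sq : IsTorusSquare A₁ := by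
    refine ⟨a + δ, b + δ, s - 2*δ, by linarith, ?_⟩
    rw [hA₁, ← arc_eq_closedBall, ← arc_eq_closedBall]
    congr 2 <;> ring_nf
  have hA₂sq : IsTorusSquare A₂ := by
    refine ⟨a - δ, b - δ, s + 2*δ, by linarith, ?_⟩
    rw [hA₂, ← arc_eq_closedBall, ← arc_eq_closedBall]
    congr 2 <;> ring_nf
  obtain ⟨N₁, hN₁⟩ := hyp A₁ hA₁sq ε' hε'pos
  obtain ⟨N₂, hN₂⟩ := hyp A₂ hA₂sq ε' hε'pos
  obtain ⟨N₃, hN₃⟩ : ∃ N : ℕ, ∀ n : ℕ, N ≤ n → (2 : ℝ) ^ (-(n : ℝ)) ≤ δ := by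
    obtain ⟨N, hN⟩ := exists_pow_lt_of_lt_one hδpos (by norm_num : (1/2 : ℝ) < 1)
    refine ⟨N, fun n hn => ?_⟩
    have h2 : (2 : ℝ) ^ (-(n : ℝ)) = (1/2 : ℝ) ^ n := by
      rw [Real.rpow_neg (by norm_num), Real.rpow_natCast, one_div, inv_pow]
    rw [h2]
    exact le_of_lt (lt_of_le_of_lt
      (pow_le_pow_of_le_one (by norm_num) (by norm_num) hn) hN)
  refine ⟨max (max N₁ N₂) N₃, fun n hn Γ hΓ => ?_⟩
  haveI := hlamfin n
  have hn₁ : N₁ ≤ n := le_trans (le_trans (le_max_left _ _) (le_max_left _ _)) hn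
  have hn₂ : N₂ ≤ n := le_trans (le_trans (le_max_right _ _) (le_max_left _ _)) hn
  have hn₃ : N₃ ≤ n := le_trans (le_max_right _ _) hn
  have hdist : ∀ x, dist (f^[m n] x) ((fn n)^[m n] x) ≤ δ :=
    fun x => (hclose n x).le.trans (hN₃ n hn₃)
  -- inclusions
  have hsub2 : Γ ∩ f^[m n] ⁻¹' (closedBall ((a + s/2 : ℝ) : UnitAddCircle) (s/2) ×ˢ
        closedBall ((b + s/2 : ℝ) : UnitAddCircle) (s/2)) ⊆ Γ ∩ (fn n)^[m n] ⁻¹' A₂ := by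
    rintro x ⟨hxΓ, hx⟩
    have hd1 : dist ((fn n)^[m n] x).1 (f^[m n] x).1 ≤ δ := by
      rw [dist_comm]
      exact le_trans (le_trans (le_max_left _ _) (le_of_eq Prod.dist_eq.symm)) (hdist x)
    have hd2 : dist ((fn n)^[m n] x).2 (f^[m n] x).2 ≤ δ := by
      rw [dist_comm]
      exact le_trans (le_trans (le_max_right _ _) (le_of_eq Prod.dist_eq.symm)) (hdist x)
    refine ⟨hxΓ, ?_, ?_⟩
    · exact mem_closedBall.mpr ((dist_triangle _ (f^[m n] x).1 _).trans
        (by have := hx.1; simp only [mem_closedBall] at this; linarith))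
    · exact mem_closedBall.mpr ((dist_triangle _ (f^[m n] x).2 _).trans
        (by have := hx.2; simp only [mem_closedBall] at this; linarith))
  have hsub1 : Γ ∩ (fn n)^[m n] ⁻¹' A₁ ⊆ Γ ∩ f^[m n] ⁻¹' (closedBall ((a + s/2 : ℝ) : UnitAddCircle) (s/2) ×ˢ
        closedBall ((b + s/2 : ℝ) : UnitAddCircle) (s/2)) := by
    rintro x ⟨hxΓ, hx⟩
    have hd1 : dist (f^[m n] x).1 ((fn n)^[m n] x).1 ≤ δ :=
      le_trans (le_trans (le_max_left _ _) (le_of_eq Prod.dist_eq.symm)) (hdist x)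
    have hd2 : dist (f^[m n] x).2 ((fn n)^[m n] x).2 ≤ δ :=
      le_trans (le_trans (le_max_right _ _) (le_of_eq Prod.dist_eq.symm)) (hdist x)
    refine ⟨hxΓ, ?_, ?_⟩
    · exact mem_closedBall.mpr ((dist_triangle _ ((fn n)^[m n] x).1 _).trans
        (by have := hx.1; simp only [mem_closedBall] at this; linarith))
    · exact mem_closedBall.mpr ((dist_triangle _ ((fn n)^[m n] x).2 _).trans
        (by have := hx.2; simp only [mem_closedBall] at this; linarith))
  -- measure computations
  have hPA : (volume (closedBall ((a + s/2 : ℝ) : UnitAddCircle) (s/2) ×ˢ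
      closedBall ((b + s/2 : ℝ) : UnitAddCircle) (s/2))).toReal = u * u := by
    rw [sq_volume _ _ _ (by linarith)]
    have h2 : 2 * (s/2) = s := by ring
    rw [h2, hu]
  have hP1 : (volume A₁).toReal = min 1 (s - 2*δ) * min 1 (s - 2*δ) := by
    rw [hA₁, sq_volume _ _ _ (by linarith)]
    have h2 : 2 * (s/2 - δ) = s - 2*δ := by ring
    rw [h2]
  have hP2 : (volume A₂).toReal = min 1 (s + 2*δ) * min 1 (s + 2*δ) := by
    rw [hA₂, sq_volume _ _ _ (by linarith)]
    have h2 : 2 * (s/2 + δ) = s + 2*δ := by ring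
    rw [h2]
  set m₁ : ℝ := min 1 (s - 2*δ) with hm₁def
  set m₂ : ℝ := min 1 (s + 2*δ) with hm₂def
  have hm₁nn : 0 ≤ m₁ := le_min zero_le_one (by linarith)
  have hm₂nn : 0 ≤ m₂ := le_min zero_le_one (by linarith)
  have hm₁ge : u - 2*δ ≤ m₁ := le_min (by linarith) (by
    have : u - 2*δ ≤ s - 2*δ := by linarith
    exact this)
  have hm₂le : m₂ ≤ u + 2*δ := by
    rcases le_total 1 s with h | h
    · have : u = 1 := min_eq_left h
      rw [this]
      exact le_trans (min_le_left _ _) (by linarith)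
    · have : u = s := min_eq_right h
      rw [this]
      exact le_trans (min_le_right _ _) (by linarith)
  -- bounds via hyp
  have hB2 := hN₂ n hn₂ Γ hΓ
  have hB1 := hN₁ n hn₁ Γ hΓ
  rw [abs_le] at hB2 hB1
  rw [hP2] at hB2
  rw [hP1] at hB1
  set G : ℝ := (lam n Γ).toReal with hG
  have hGnn : 0 ≤ G := ENNReal.toReal_nonneg
  set L : ℝ := (lam n (Γ ∩ f^[m n] ⁻¹' (closedBall ((a + s/2 : ℝ) : UnitAddCircle) (s/2) ×ˢ
      closedBall ((b + s/2 : ℝ) : UnitAddCircle) (s/2)))).toReal with hL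
  have hLnn : 0 ≤ L := ENNReal.toReal_nonneg
  have hLe : L ≤ (lam n (Γ ∩ (fn n)^[m n] ⁻¹' A₂)).toReal :=
    ENNReal.toReal_mono (measure_ne_top _ _) (measure_mono hsub2)
  have hGe : (lam n (Γ ∩ (fn n)^[m n] ⁻¹' A₁)).toReal ≤ L :=
    ENNReal.toReal_mono (measure_ne_top _ _) (measure_mono hsub1)
  have hupper : L ≤ (1 + ε') * G * (m₂ * m₂) := by linarith [hB2.2, hLe]
  have hlower : (1 - ε') * G * (m₁ * m₁) ≤ L := by linarith [hB1.1, hGe]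
  rw [hPA, abs_le]
  have hGu : (0:ℝ) ≤ G * (u * u) := mul_nonneg hGnn (mul_nonneg hupos.le hupos.le)
  have h10 : 10 * ε' * G * (u * u) ≤ 10 * ε * G * (u * u) := by
    linarith [mul_le_mul_of_nonneg_right hε'leε hGu]
  have hm₂sq : m₂ * m₂ ≤ (u + 2*δ) * (u + 2*δ) :=
    mul_le_mul hm₂le hm₂le hm₂nn (by linarith)
  rw [hδ] at hm₂sq
  have hm₂sq' : m₂ * m₂ ≤ (u*(1+ε'/4)) * (u*(1+ε'/4)) := by linarith [hm₂sq]
  have kscal : (1+ε')*((1+ε'/4)*(1+ε'/4)) ≤ 1 + 10*ε' := kscal_aux hε'pos.le hε'le1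
  have hX : (1+ε')*G*(m₂*m₂) ≤ (1+10*ε')*(G*(u*u)) := by
    calc (1+ε')*G*(m₂*m₂) ≤ (1+ε')*G*((u*(1+ε'/4))*(u*(1+ε'/4))) :=
          mul_le_mul_of_nonneg_left hm₂sq' (mul_nonneg (by linarith) hGnn)
      _ = ((1+ε')*((1+ε'/4)*(1+ε'/4)))*(G*(u*u)) := by ring
      _ ≤ (1+10*ε')*(G*(u*u)) := mul_le_mul_of_nonneg_right kscal hGu
  have hm₁sq : (u - 2*δ) * (u - 2*δ) ≤ m₁ * m₁ :=
    mul_le_mul hm₁ge hm₁ge (by rw [hδ]; linarith) hm₁nn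
  rw [hδ] at hm₁sq
  have hm₁sq' : (u*(1-ε'/4)) * (u*(1-ε'/4)) ≤ m₁ * m₁ := by linarith [hm₁sq]
  have kscal2 : 1 - 2*ε' ≤ (1-ε')*((1-ε'/4)*(1-ε'/4)) := kscal2_aux hε'pos.le hε'le1
  have hY : (1-2*ε')*(G*(u*u)) ≤ (1-ε')*G*(m₁*m₁) := by
    calc (1-2*ε')*(G*(u*u)) ≤ ((1-ε')*((1-ε'/4)*(1-ε'/4)))*(G*(u*u)) :=
          mul_le_mul_of_nonneg_right kscal2 hGu
      _ = (1-ε')*G*((u*(1-ε'/4))*(u*(1-ε'/4))) := by ring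
      _ ≤ (1-ε')*G*(m₁*m₁) :=
          mul_le_mul_of_nonneg_left hm₁sq' (mul_nonneg (by linarith) hGnn)
  have hεGu : (0:ℝ) ≤ ε' * (G * (u * u)) := mul_nonneg hε'pos.le hGu
  constructor
  · linarith [hupper, hX, hεGu, h10]
  · linarith [hlower, hY, hεGu, h10]
end

section
/- Let (f_n) be a sequence of diffeomorphisms of a compact manifold M with f_n = H_n ∘ R_{α_{n+1}} ∘ H_n⁻¹ where h_n ∘ R_{α_n} = R_{α_n} ∘ h_n and H_n = h_1∘⋯∘h_n. Let k_n ↑ ∞ with Σ 1/k_n < ε, and suppose |α − α_n| < 1/(2 k_n C_{k_n} |||H_n|||_{k_n+1}^{k_n+1}) for all n, where C_k are the constants from the conjugation estimate d_k(H R_α H⁻¹, H R_β H⁻¹) ≤ C_k |||H|||_{k+1}^{k+1} |α−β|. Then (f_n) is Cauchy in every C^k metric; in particular d_k(f_n, f_{n−1}) ≤ 1/k_n for all k ≤ k_n, and (f_n) converges in the C^∞ topology. -/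
open Filter

/-- Convergence of the conjugation scheme: if `f_n = H_n ∘ R_{α_{n+1}} ∘ H_n⁻¹`
with `h_n ∘ R_{α_n} = R_{α_n} ∘ h_n`, `H_n = h_1∘⋯∘h_n`, `k_n ↑ ∞` with
`Σ 1/k_n < ∞`, and `|α − α_n| < 1/(2 k_n C_{k_n} |||H_n|||_{k_n+1}^{k_n+1})`,
where the abstract `C^k` distances `d_k` satisfy the conjugation estimate
`d_k(H R_β H⁻¹, H R_γ H⁻¹) ≤ C_k |||H|||_{k+1}^{k+1} |β−γ|`, then
`d_k(f_n, f_{n−1}) ≤ 1/k_n` for `k ≤ k_n`, and `(f_n)` is Cauchy in every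
`d_k`. -/
theorem conjugation_scheme_convergence
    {M : Type*}
    (d : ℕ → (M → M) → (M → M) → ℝ)
    (hd_nonneg : ∀ k F G, 0 ≤ d k F G)
    (hd_symm : ∀ k F G, d k F G = d k G F)
    (hd_tri : ∀ k F G H', d k F H' ≤ d k F G + d k G H')
    (hd_mono : ∀ k k', k ≤ k' → ∀ F G, d k F G ≤ d k' F G)
    (R : ℝ → M ≃ M)
    (C : ℕ → ℝ) (hC : ∀ k, 0 < C k)
    (Nrm : ℕ → (M ≃ M) → ℝ) (hNrm : ∀ k H, 1 ≤ Nrm k H)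
    (hest : ∀ (k : ℕ) (H : M ≃ M) (β γ : ℝ),
      d k ((H : M → M) ∘ (R β : M → M) ∘ (H.symm : M → M))
          ((H : M → M) ∘ (R γ : M → M) ∘ (H.symm : M → M))
        ≤ C k * (Nrm (k + 1) H) ^ (k + 1) * |β - γ|)
    (α : ℝ) (a : ℕ → ℝ)
    (hdec : Antitone fun n => |α - a n|)
    (kseq : ℕ → ℕ) (hk1 : ∀ n, 1 ≤ kseq n) (hkmono : Monotone kseq)
    (hktop : Tendsto (fun n => (kseq n : ℝ)) atTop atTop)
    (hksum : Summable fun n => 1 / (kseq n : ℝ))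
    (h H : ℕ → M ≃ M)
    (hH0 : H 0 = h 0)
    (hHrec : ∀ n, H (n + 1) = (h (n + 1)).trans (H n))
    (hcomm : ∀ n x, h n (R (a n) x) = R (a n) (h n x))
    (hclose : ∀ n, |α - a n| <
      1 / (2 * (kseq n : ℝ) * C (kseq n) * (Nrm (kseq n + 1) (H n)) ^ (kseq n + 1)))
    (f : ℕ → M → M)
    (hf : ∀ n, f n = (H n : M → M) ∘ (R (a (n + 1)) : M → M) ∘ ((H n).symm : M → M)) :
    (∀ n, 1 ≤ n → ∀ k ≤ kseq n, d k (f n) (f (n - 1)) ≤ 1 / (kseq n : ℝ)) ∧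
    (∀ k : ℕ, ∀ δ : ℝ, 0 < δ → ∃ N, ∀ p, N ≤ p → ∀ q, N ≤ q →
      d k (f p) (f q) < δ) := by

  -- Key identity: `f m = H (m+1) ∘ R (a (m+1)) ∘ (H (m+1)).symm`
  have key : ∀ m, (H (m+1) : M → M) ∘ (R (a (m+1)) : M → M) ∘ ((H (m+1)).symm : M → M) = f m := by
    intro m
    funext x
    simp only [hf, hHrec, Function.comp_apply, Equiv.trans_apply, Equiv.symm_trans_apply]
    rw [hcomm, Equiv.apply_symm_apply]
  -- Step estimate
  have step : ∀ m, ∀ k ≤ kseq (m+1), d k (f (m+1)) (f m) ≤ 1 / (kseq (m+1) : ℝ) := by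
    intro m k hk
    have hkpos : (0:ℝ) < (kseq (m+1) : ℝ) := by
      exact_mod_cast Nat.lt_of_lt_of_le Nat.zero_lt_one (hk1 (m+1))
    have hcpos := hC (kseq (m+1))
    have hNpos : (0:ℝ) < (Nrm (kseq (m+1) + 1) (H (m+1))) ^ (kseq (m+1) + 1) :=
      pow_pos (lt_of_lt_of_le one_pos (hNrm _ _)) _
    have h1 : d k (f (m+1)) (f m) ≤ d (kseq (m+1)) (f (m+1)) (f m) := hd_mono k _ hk _ _
    have h2 : d (kseq (m+1)) (f (m+1)) (f m) ≤
        C (kseq (m+1)) * (Nrm (kseq (m+1) + 1) (H (m+1))) ^ (kseq (m+1) + 1)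
          * |a (m+2) - a (m+1)| := by
      rw [hf (m+1), ← key m]
      exact hest _ _ _ _
    have h3 : |a (m+2) - a (m+1)| ≤ 2 * |α - a (m+1)| := by
      have hm := hdec (Nat.le_succ (m+1))
      simp only [] at hm
      calc |a (m+2) - a (m+1)| ≤ |a (m+2) - α| + |α - a (m+1)| := abs_sub_le _ _ _
        _ = |α - a (m+2)| + |α - a (m+1)| := by rw [abs_sub_comm]
        _ ≤ 2 * |α - a (m+1)| := by linarith
    have hc := hclose (m+1)
    have hden : (0:ℝ) < 2 * (kseq (m+1) : ℝ) * C (kseq (m+1))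
        * (Nrm (kseq (m+1) + 1) (H (m+1))) ^ (kseq (m+1) + 1) := by positivity
    have hc' : |α - a (m+1)| * (2 * (kseq (m+1) : ℝ) * C (kseq (m+1))
        * (Nrm (kseq (m+1) + 1) (H (m+1))) ^ (kseq (m+1) + 1)) < 1 :=
      (lt_div_iff₀ hden).1 hc
    have hfin : C (kseq (m+1)) * (Nrm (kseq (m+1) + 1) (H (m+1))) ^ (kseq (m+1) + 1)
        * |a (m+2) - a (m+1)| ≤ 1 / (kseq (m+1) : ℝ) := by
      rw [le_div_iff₀ hkpos]
      nlinarith [abs_nonneg (α - a (m+1)), abs_nonneg (a (m+2) - a (m+1)),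
        mul_le_mul_of_nonneg_left h3
          (le_of_lt (by positivity : (0:ℝ) < C (kseq (m+1))
            * (Nrm (kseq (m+1) + 1) (H (m+1))) ^ (kseq (m+1) + 1) * (kseq (m+1) : ℝ)))]
    linarith
  constructor
  · intro n hn k hk
    cases n with
    | zero => omega
    | succ m => simpa using step m k hk
  · -- Cauchy
    intro k δ hδ
    -- chain bound
    have chain : ∀ q, (∀ n, q ≤ n → k ≤ kseq (n+1)) → ∀ p, q < p →
        d k (f p) (f q) ≤ ∑ n ∈ Finset.Ico q p, (1 / (kseq (n+1) : ℝ)) := by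
      intro q hkq p
      induction p with
      | zero => omega
      | succ p ih =>
        intro hqp
        rcases Nat.lt_or_ge q p with hlt | hge
        · have hih := ih hlt
          have tri := hd_tri k (f (p+1)) (f p) (f q)
          have st := step p k (hkq p (le_of_lt hlt))
          rw [Finset.sum_Ico_succ_top (le_of_lt (Nat.lt_of_lt_of_le hlt (Nat.le_refl p)))]
          linarith
        · have hqe : q = p := le_antisymm (Nat.lt_succ_iff.1 hqp) hge
          subst hqe
          rw [Nat.Ico_succ_singleton, Finset.sum_singleton]
          exact step q k (hkq q le_rfl)
    obtain ⟨N0, hN0⟩ := eventually_atTop.1 (hktop.eventually_ge_atTop (k : ℝ))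
    have hN0' : ∀ n, N0 ≤ n → k ≤ kseq n := by
      intro n hn; exact_mod_cast hN0 n hn
    have hg : Summable (fun n => 1 / (kseq (n+1) : ℝ)) :=
      (summable_nat_add_iff 1).2 hksum
    obtain ⟨s, hs⟩ := hg.vanishing (Iio_mem_nhds (by linarith : (0:ℝ) < δ / 2))
    refine ⟨max N0 (s.sup id + 1), ?_⟩
    intro p hp q hq
    set N := max N0 (s.sup id + 1) with hN
    have tailbound : ∀ r, N ≤ r → ∀ m, r < m →
        d k (f m) (f r) < δ / 2 := by
      intro r hr m hm
      have h1 : d k (f m) (f r) ≤ ∑ n ∈ Finset.Ico r m, (1 / (kseq (n+1) : ℝ)) := by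
        refine chain r ?_ m hm
        intro n hn
        have h0 : N0 ≤ N := le_max_left _ _
        exact hN0' (n+1) (by omega)
      have hdisj : Disjoint (Finset.Ico r m) s := by
        rw [Finset.disjoint_left]
        intro x hx hxs
        have h1 := Finset.le_sup (f := id) hxs
        have h2 : r ≤ x := (Finset.mem_Ico.1 hx).1
        simp only [id] at h1
        omega
      have := hs _ hdisj
      simp only [Set.mem_Iio] at this
      linarith
    set m := max p q + 1 with hm
    have hpm : p < m := by omega
    have hqm : q < m := by omega
    have b1 : d k (f m) (f p) < δ / 2 := tailbound p hp m hpm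
    have b2 : d k (f m) (f q) < δ / 2 := tailbound q hq m hqm
    have tri := hd_tri k (f p) (f m) (f q)
    have hsym := hd_symm k (f p) (f m)
    linarith
end
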